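/- arXiv:1102.0885 — 5 statements merged into one kernel-verified Lean document; each statement's English description precedes it below -/
import Mathlib

section
/- Let X₀ and X₁ be random variables taking values in finite sets 𝒳₀ and 𝒳₁ with joint distribution P, and let α ≥ 0 be such that the joint min-entropy satisfies H_∞(X₀X₁) ≥ α, i.e. P(x₀,x₁) ≤ 2^{-α} for all (x₀,x₁) ∈ 𝒳₀ × 𝒳₁. Then there exists a binary random variable K ∈ {0,1}, given as a deterministic function K = f(X₀,X₁) for some f : 𝒳₀ × 𝒳₁ → {0,1}, such that H_∞(X_{1−K}K) ≥ α/2; explicitly, for every k ∈ {0,1} and every value x, Pr[X_{1−k} = x and f(X₀,X₁) = k] ≤ 2^{-α/2} (where X_{1−k} denotes X₁ if k = 0 and X₀ if k = 1). -/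
/-- **Min-Entropy-Splitting Lemma.** If the joint min-entropy of `(X₀, X₁)` with joint
distribution `P` satisfies `H_∞(X₀X₁) ≥ α`, i.e. `P(x₀,x₁) ≤ 2^(-α)` for all pairs, then
there is a binary random variable `K = f(X₀,X₁)` such that `H_∞(X_{1-K} K) ≥ α/2`:
for every `k ∈ {0,1}` and every value `x`,
`Pr[X_{1-k} = x ∧ f(X₀,X₁) = k] ≤ 2^(-α/2)` (with `false ↔ 0`, `true ↔ 1`;
`X_{1-k}` is `X₁` for `k = 0` and `X₀` for `k = 1`). -/
theorem min_entropy_splitting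
    {𝒳₀ 𝒳₁ : Type*} [Fintype 𝒳₀] [Fintype 𝒳₁]
    (P : 𝒳₀ × 𝒳₁ → ℝ) (hP0 : ∀ p, 0 ≤ P p) (hP1 : ∑ p, P p = 1)
    (α : ℝ) (hα : 0 ≤ α)
    (hmin : ∀ p, P p ≤ (2 : ℝ) ^ (-α)) :
    ∃ f : 𝒳₀ × 𝒳₁ → Bool,
      (∀ x₁ : 𝒳₁,
        (∑ x₀ : 𝒳₀, if f (x₀, x₁) = false then P (x₀, x₁) else 0)
          ≤ (2 : ℝ) ^ (-(α / 2))) ∧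
      (∀ x₀ : 𝒳₀,
        (∑ x₁ : 𝒳₁, if f (x₀, x₁) = true then P (x₀, x₁) else 0)
          ≤ (2 : ℝ) ^ (-(α / 2))) := by
  set c : ℝ := (2 : ℝ) ^ (-(α / 2)) with hc
  have hcpos : 0 < c := Real.rpow_pos_of_pos two_pos _
  set Q : 𝒳₁ → ℝ := fun x₁ => ∑ x₀ : 𝒳₀, P (x₀, x₁) with hQ
  have hQ0 : ∀ x₁, 0 ≤ Q x₁ := fun x₁ => Finset.sum_nonneg fun _ _ => hP0 _
  have hQsum : ∑ x₁, Q x₁ = 1 := by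
    rw [← hP1, ← Fintype.sum_prod_type']
    exact Fintype.sum_equiv (Equiv.prodComm _ _) _ _ (fun x => rfl)
  refine ⟨fun p => decide (c < Q p.2), ?_, ?_⟩
  · intro x₁
    by_cases h : c < Q x₁
    · simp [h]
      positivity
    · simp only [decide_eq_false_iff_not, not_lt] at h
      calc (∑ x₀ : 𝒳₀, if (decide (c < Q x₁)) = false then P (x₀, x₁) else 0)
          ≤ ∑ x₀ : 𝒳₀, P (x₀, x₁) := by
            apply Finset.sum_le_sum
            intro i _
            split <;> simp [hP0]
        _ ≤ c := h
  · intro x₀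
    -- S : set of heavy x₁
    set S : Finset 𝒳₁ := Finset.univ.filter (fun x₁ => c < Q x₁) with hS
    have hcard : (S.card : ℝ) * c ≤ 1 := by
      have h1 : (S.card : ℝ) * c ≤ ∑ x₁ ∈ S, Q x₁ := by
        rw [Finset.card_eq_sum_ones, Nat.cast_sum, Finset.sum_mul]
        apply Finset.sum_le_sum
        intro i hi
        simp only [hS, Finset.mem_filter] at hi
        simpa using hi.2.le
      have h2 : ∑ x₁ ∈ S, Q x₁ ≤ 1 := by
        rw [← hQsum]
        exact Finset.sum_le_sum_of_subset_of_nonneg (Finset.subset_univ S)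
          (fun i _ _ => hQ0 i)
      linarith
    have hsum : (∑ x₁ : 𝒳₁, if (decide (c < Q x₁)) = true then P (x₀, x₁) else 0)
        = ∑ x₁ ∈ S, P (x₀, x₁) := by
      rw [hS, Finset.sum_filter]
      apply Finset.sum_congr rfl
      intro i _
      by_cases h : c < Q i <;> simp [h]
    rw [hsum]
    have hbound : ∑ x₁ ∈ S, P (x₀, x₁) ≤ (S.card : ℝ) * (2 : ℝ) ^ (-α) := by
      rw [Finset.card_eq_sum_ones, Nat.cast_sum, Finset.sum_mul]
      apply Finset.sum_le_sum
      intro i _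
      simpa using hmin (x₀, i)
    have key : (S.card : ℝ) * (2 : ℝ) ^ (-α) ≤ c := by
      have h2a : (2 : ℝ) ^ (-α) = c * c := by
        rw [hc, ← Real.rpow_add two_pos]
        ring_nf
      rw [h2a, ← mul_assoc]
      calc (S.card : ℝ) * c * c ≤ 1 * c := by
            apply mul_le_mul_of_nonneg_right hcard hcpos.le
        _ = c := one_mul c
    linarith
end

section
/- Let ι be a finite index set, J ⊆ ι a nonempty subset, E a finite-dimensional complex inner product space, α : J → ℂ with Σ_{j∈J} |α_j|² = 1, and φ : J → E with ‖φ_j‖ = 1 for all j ∈ J. Let {u_w}_{w∈𝒲} be an orthonormal basis of the space ℂ^ι (with inner product ⟨u,v⟩ = Σ_{i∈ι} conj(u(i))·v(i)), and define, for each w ∈ 𝒲, P(w) = ‖Σ_{j∈J} α_j · conj(u_w(j)) · φ_j‖² and P̃(w) = Σ_{j∈J} |α_j|² · |u_w(j)|². Then for every w ∈ 𝒲 one has P(w) ≤ |J| · P̃(w); consequently −log₂ max_w P(w) ≥ −log₂ max_w P̃(w) − log₂|J|. -/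
/-- **Small-superposition lemma, part 1.** Let `J` be a nonempty finite subset of the
finite index set `ι`, `E` a finite-dimensional complex inner product space,
`α : J → ℂ` with `∑_{j∈J} |α j|² = 1` and `φ : J → E` unit vectors. Let `u` be an
orthonormal basis of `ℂ^ι` indexed by `𝒲`. With
`P w = ‖∑_{j∈J} α j · conj (u w j) • φ j‖²` and
`P̃ w = ∑_{j∈J} |α j|² · |u w j|²`, one has `P w ≤ |J| · P̃ w` for every `w`;
consequently `−log₂ max_w P w ≥ −log₂ max_w P̃ w − log₂ |J|`. -/
theorem small_superposition_min_entropy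
    {ι 𝒲 : Type*} [Fintype ι] [DecidableEq ι] [Fintype 𝒲] [Nonempty 𝒲]
    {E : Type*} [NormedAddCommGroup E] [InnerProductSpace ℂ E] [FiniteDimensional ℂ E]
    (J : Finset ι) (hJ : J.Nonempty)
    (α : ι → ℂ) (hα : ∑ j ∈ J, ‖α j‖ ^ 2 = 1)
    (φ : ι → E) (hφ : ∀ j ∈ J, ‖φ j‖ = 1)
    (u : OrthonormalBasis 𝒲 ℂ (EuclideanSpace ℂ ι))
    (P P' : 𝒲 → ℝ)
    (hP : ∀ w, P w = ‖∑ j ∈ J, (α j * (starRingEnd ℂ) (u w j)) • φ j‖ ^ 2)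
    (hP' : ∀ w, P' w = ∑ j ∈ J, ‖α j‖ ^ 2 * ‖u w j‖ ^ 2) :
    (∀ w, P w ≤ (J.card : ℝ) * P' w) ∧
    (- Real.logb 2 (Finset.univ.sup' Finset.univ_nonempty P)
      ≥ - Real.logb 2 (Finset.univ.sup' Finset.univ_nonempty P')
          - Real.logb 2 (J.card : ℝ)) := by
  have part1 : ∀ w, P w ≤ (J.card : ℝ) * P' w := by
    intro w
    rw [hP, hP']
    calc ‖∑ j ∈ J, (α j * (starRingEnd ℂ) (u w j)) • φ j‖ ^ 2
        ≤ (∑ j ∈ J, ‖(α j * (starRingEnd ℂ) (u w j)) • φ j‖) ^ 2 :=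
          pow_le_pow_left₀ (norm_nonneg _) (norm_sum_le _ _) 2
      _ = (∑ j ∈ J, ‖α j‖ * ‖u w j‖) ^ 2 := by
          congr 1
          refine Finset.sum_congr rfl fun j hj => ?_
          rw [norm_smul, hφ j hj, mul_one, norm_mul, RCLike.norm_conj]
      _ ≤ J.card * ∑ j ∈ J, (‖α j‖ * ‖u w j‖) ^ 2 := sq_sum_le_card_mul_sum_sq
      _ = J.card * ∑ j ∈ J, ‖α j‖ ^ 2 * ‖u w j‖ ^ 2 := by simp [mul_pow]
  refine ⟨part1, ?_⟩
  set M : ℝ := Finset.univ.sup' Finset.univ_nonempty P with hM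
  set M' : ℝ := Finset.univ.sup' Finset.univ_nonempty P' with hM'
  have hPnn : ∀ w, 0 ≤ P w := fun w => by rw [hP]; positivity
  have hcard : (0:ℝ) < J.card := by exact_mod_cast Finset.card_pos.mpr hJ
  have hMpos : 0 < M := by
    by_contra h
    push_neg at h
    have hall : ∀ w, P w = 0 := fun w =>
      le_antisymm (le_trans (Finset.le_sup' P (Finset.mem_univ w)) h) (hPnn w)
    have hv : ∀ w, (∑ j ∈ J, (α j * (starRingEnd ℂ) (u w j)) • φ j) = 0 := by
      intro w
      have h0 := hall w
      rw [hP] at h0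
      have h1 : ‖∑ j ∈ J, (α j * (starRingEnd ℂ) (u w j)) • φ j‖ = 0 :=
        pow_eq_zero_iff two_ne_zero |>.mp h0
      exact norm_eq_zero.mp h1
    obtain ⟨j0, hj0J, hj0⟩ : ∃ j0 ∈ J, α j0 ≠ 0 := by
      by_contra h'
      push_neg at h'
      rw [Finset.sum_eq_zero (fun j hj => by rw [h' j hj]; simp)] at hα
      norm_num at hα
    have hkey : ∀ j, (∑ w, u w j0 * (starRingEnd ℂ) (u w j))
        = if j = j0 then (1:ℂ) else 0 := by
      intro j
      have := u.sum_inner_mul_inner (EuclideanSpace.single j0 (1:ℂ))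
        (EuclideanSpace.single j (1:ℂ))
      simpa [EuclideanSpace.inner_single_left, EuclideanSpace.inner_single_right,
        EuclideanSpace.single_apply] using this
    have hsum : (∑ w, (u w j0) • (∑ j ∈ J, (α j * (starRingEnd ℂ) (u w j)) • φ j))
        = α j0 • φ j0 := by
      have : (∑ w, (u w j0) • (∑ j ∈ J, (α j * (starRingEnd ℂ) (u w j)) • φ j))
          = ∑ j ∈ J, (α j * ∑ w, u w j0 * (starRingEnd ℂ) (u w j)) • φ j := by
        simp_rw [Finset.smul_sum, smul_smul]
        rw [Finset.sum_comm]
        refine Finset.sum_congr rfl fun j _ => ?_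
        rw [Finset.mul_sum, ← Finset.sum_smul]
        congr 1
        refine Finset.sum_congr rfl fun w _ => by ring
      rw [this]
      have : ∀ j ∈ J, (α j * ∑ w, u w j0 * (starRingEnd ℂ) (u w j)) • φ j
          = (if j = j0 then α j0 • φ j0 else 0) := by
        intro j _
        rw [hkey j]
        by_cases h : j = j0 <;> simp [h]
      rw [Finset.sum_congr rfl this, Finset.sum_ite_eq' J j0 (fun _ => α j0 • φ j0)]
      simp [hj0J]
    rw [Finset.sum_eq_zero (fun w _ => by rw [hv w, smul_zero])] at hsum
    have : ‖α j0 • φ j0‖ = 0 := by rw [← hsum, norm_zero]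
    rw [norm_smul, hφ j0 hj0J, mul_one, norm_eq_zero] at this
    exact hj0 this
  obtain ⟨w0, _, hw0⟩ := Finset.exists_mem_eq_sup' (Finset.univ_nonempty (α := 𝒲)) P
  have hMle : M ≤ (J.card : ℝ) * M' := by
    rw [hM, hw0]
    exact (part1 w0).trans
      (mul_le_mul_of_nonneg_left (Finset.le_sup' P' (Finset.mem_univ w0)) hcard.le)
  have hM'pos : 0 < M' := by nlinarith
  have hlog : Real.logb 2 M ≤ Real.logb 2 ((J.card : ℝ) * M') :=
    (Real.logb_le_logb one_lt_two hMpos (by positivity)).mpr hMle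
  rw [Real.logb_mul (ne_of_gt hcard) (ne_of_gt hM'pos)] at hlog
  linarith
end

section
/- Let F be a field, σ ≥ 1, Σ = 4σ, and fix σ + Σ pairwise distinct elements a₁,…,a_σ, b₁,…,b_Σ of F. For m, s ∈ F^σ let f_{m,s} be the unique polynomial over F of degree at most 2σ−1 with f_{m,s}(a_i) = m_i and f_{m,s}(b_i) = s_i for i = 1,…,σ, and define the share vector sss(m;s) = (f_{m,s}(b₁),…,f_{m,s}(b_Σ)) ∈ F^Σ. Then for any two distinct messages m¹ ≠ m² in F^σ and any randomizers s¹, s² ∈ F^σ, the share vectors sss(m¹;s¹) and sss(m²;s²) differ in at least Σ − 2σ positions, i.e. their Hamming distance is at least 2σ. -/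
/-- **Distance of the secret-sharing code.** Fix pairwise distinct points
`a₁,…,a_σ, b₁,…,b_{4σ}` in a field `F`. If `f` and `g` are polynomials of degree at most
`2σ − 1` interpolating the messages `m₁` resp. `m₂` at the points `a i` and the
randomizers `s₁` resp. `s₂` at the first `σ` points `b i`, and `m₁ ≠ m₂`, then the share
vectors `(f(b₁),…,f(b_{4σ}))` and `(g(b₁),…,g(b_{4σ}))` have Hamming distance at least
`4σ − 2σ = 2σ`. -/
theorem sss_hamming_distance
    {F : Type*} [Field F] [DecidableEq F]
    (σ : ℕ) (hσ : 1 ≤ σ)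
    (a : Fin σ → F) (b : Fin (4 * σ) → F)
    (hinj : Function.Injective (Sum.elim a b : Fin σ ⊕ Fin (4 * σ) → F))
    (m₁ m₂ s₁ s₂ : Fin σ → F)
    (f g : Polynomial F)
    (hfdeg : f.natDegree ≤ 2 * σ - 1) (hgdeg : g.natDegree ≤ 2 * σ - 1)
    (hfa : ∀ i : Fin σ, f.eval (a i) = m₁ i)
    (hfb : ∀ i : Fin σ, f.eval (b (Fin.castLE (by omega) i)) = s₁ i)
    (hga : ∀ i : Fin σ, g.eval (a i) = m₂ i)
    (hgb : ∀ i : Fin σ, g.eval (b (Fin.castLE (by omega) i)) = s₂ i)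
    (hm : m₁ ≠ m₂) :
    2 * σ ≤ hammingDist (fun i => f.eval (b i)) (fun i => g.eval (b i)) := by
  by_contra hlt
  push_neg at hlt
  have hbinj : Function.Injective b := fun i j h => by
    have := hinj (a₁ := Sum.inr i) (a₂ := Sum.inr j) h
    simpa using this
  -- set of agreement indices
  set S : Finset (Fin (4 * σ)) :=
    Finset.univ.filter (fun i => f.eval (b i) = g.eval (b i)) with hS
  have hsum := Finset.card_filter_add_card_filter_not
      (s := (Finset.univ : Finset (Fin (4 * σ))))
      (p := fun i => f.eval (b i) = g.eval (b i))
  simp only [Finset.card_univ, Fintype.card_fin, ne_eq] at hsum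
  have hScard : 4 * σ - hammingDist (fun i => f.eval (b i)) (fun i => g.eval (b i)) = S.card := by
    rw [hammingDist]
    simp only [hS, ne_eq]
    omega
  have hcard : 2 * σ < S.card := by
    have : (hammingDist (fun i => f.eval (b i)) (fun i => g.eval (b i))) ≤ 4 * σ := by
      exact (hammingDist_le_card_fintype).trans (by simp)
    omega
  -- f - g vanishes on S
  have hzero : f - g = 0 := by
    apply Polynomial.eq_zero_of_natDegree_lt_card_of_eval_eq_zero (f - g)
      (f := fun i : S => b i) (fun i j h => Subtype.ext (hbinj h))
    · intro i
      have hi := i.2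
      simp only [hS, Finset.mem_filter] at hi
      simp [hi.2]
    · calc (f - g).natDegree ≤ max f.natDegree g.natDegree := Polynomial.natDegree_sub_le f g
        _ ≤ 2 * σ - 1 := max_le hfdeg hgdeg
        _ < S.card := by omega
        _ = Fintype.card S := (Fintype.card_coe S).symm
  have hfg : f = g := sub_eq_zero.mp hzero
  apply hm
  funext i
  rw [← hfa i, ← hga i, hfg]
end

section
/- Let F be a field, σ ≥ 1, Σ = 4σ, and fix σ + Σ pairwise distinct elements a₁,…,a_σ, b₁,…,b_Σ of F. For m, s ∈ F^σ let f_{m,s} be the unique polynomial over F of degree at most 2σ−1 with f_{m,s}(a_i) = m_i and f_{m,s}(b_i) = s_i for i = 1,…,σ, and define sss(m;s) = (f_{m,s}(b₁),…,f_{m,s}(b_Σ)) ∈ F^Σ. Then for every message m ∈ F^σ and every subset S ⊆ {1,…,Σ} with |S| = σ, the map F^σ → F^S sending s to the restriction sss(m;s)|_S is a bijection. In particular, if s is chosen uniformly at random in F^σ, then the restricted shares sss(m;s)|_S are uniformly distributed on F^S, independently of m. -/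
open Polynomial

private lemma poly_eq_of_agree {F : Type*} [Field F] (σ : ℕ) (hσ : 1 ≤ σ)
    {node : Fin σ ⊕ Fin σ → F} (hnode : Function.Injective node)
    {f g : F[X]} (hf : f.natDegree ≤ 2 * σ - 1) (hg : g.natDegree ≤ 2 * σ - 1)
    (h : ∀ i, f.eval (node i) = g.eval (node i)) : f = g := by
  have hsub : f - g = 0 := by
    apply Polynomial.eq_zero_of_natDegree_lt_card_of_eval_eq_zero (f - g) hnode
      (fun i => by simp [h i])
    have hd : (f - g).natDegree ≤ 2 * σ - 1 :=
      le_trans (Polynomial.natDegree_sub_le f g) (max_le hf hg)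
    simp only [Fintype.card_sum, Fintype.card_fin]
    omega
  exact sub_eq_zero.mp hsub

/-- **Uniformity of restricted shares.** Fix pairwise distinct points
`a₁,…,a_σ, b₁,…,b_{4σ}` in a field `F`, and let `sss m s` be the share vector
`(f_{m,s}(b₁),…,f_{m,s}(b_{4σ}))`, where `f_{m,s}` is the (unique) polynomial of degree
at most `2σ − 1` with `f_{m,s}(a i) = m i` and `f_{m,s}(b i) = s i` for `i = 1,…,σ`.
Then for every message `m` and every subset `S ⊆ {1,…,4σ}` of size `σ`, the map sending
the randomizer `s ∈ F^σ` to the restriction `sss m s |_S` is a bijection; in particular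
the restricted shares of a uniformly random `s` are uniform, independently of `m`. -/
theorem sss_restriction_bijective
    {F : Type*} [Field F]
    (σ : ℕ) (hσ : 1 ≤ σ)
    (a : Fin σ → F) (b : Fin (4 * σ) → F)
    (hinj : Function.Injective (Sum.elim a b : Fin σ ⊕ Fin (4 * σ) → F))
    (sss : (Fin σ → F) → (Fin σ → F) → Fin (4 * σ) → F)
    (hsss : ∀ m s : Fin σ → F, ∃ f : Polynomial F,
      f.natDegree ≤ 2 * σ - 1 ∧
      (∀ i : Fin σ, f.eval (a i) = m i) ∧
      (∀ i : Fin σ, f.eval (b (Fin.castLE (by omega) i)) = s i) ∧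
      (∀ i : Fin (4 * σ), sss m s i = f.eval (b i)))
    (m : Fin σ → F) (S : Finset (Fin (4 * σ))) (hS : S.card = σ) :
    Function.Bijective (fun s : Fin σ → F => fun i : S => sss m s i) := by
  classical
  -- general fact: for injective u, Sum.elim a (b ∘ u) is injective
  have hinj' : ∀ u : Fin σ → Fin (4 * σ), Function.Injective u →
      Function.Injective (Sum.elim a (fun i => b (u i))) := by
    intro u hu
    have : Sum.elim a (fun i => b (u i)) =
        (Sum.elim a b : Fin σ ⊕ Fin (4 * σ) → F) ∘ Sum.map id u := by
      ext x; cases x <;> simp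
    rw [this]
    exact hinj.comp (Sum.map_injective.mpr ⟨Function.injective_id, hu⟩)
  -- enumeration of S
  set e : Fin σ → Fin (4 * σ) := fun i => (S.orderIsoOfFin hS i : Fin (4 * σ)) with he
  have heS : ∀ i, e i ∈ S := fun i => (S.orderIsoOfFin hS i).2
  have heinj : Function.Injective e :=
    Subtype.val_injective.comp (fun x y h => (S.orderIsoOfFin hS).injective h)
  have hcastinj : Function.Injective (fun i : Fin σ => (Fin.castLE (by omega : σ ≤ 4 * σ) i)) :=
    fun x y h => Fin.castLE_injective _ h
  constructor
  · -- injectivity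
    intro s s' h
    obtain ⟨f, hfdeg, hfa, hfb, hfsss⟩ := hsss m s
    obtain ⟨f', hfdeg', hfa', hfb', hfsss'⟩ := hsss m s'
    have hfe : f = f' := by
      apply poly_eq_of_agree σ hσ (hinj' e heinj) hfdeg hfdeg'
      rintro (i | i)
      · simp only [Sum.elim_inl]; rw [hfa i, hfa' i]
      · simp only [Sum.elim_inr]
        rw [← hfsss (e i), ← hfsss' (e i)]
        exact congrFun h ⟨e i, heS i⟩
    funext i
    rw [← hfb i, ← hfb' i, hfe]
  · -- surjectivity
    intro t
    set node : Fin σ ⊕ Fin σ → F := Sum.elim a (fun i => b (e i)) with hnode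
    have hnodeinj : Function.Injective node := hinj' e heinj
    set r : Fin σ ⊕ Fin σ → F :=
      Sum.elim m (fun i => t ⟨e i, heS i⟩) with hr
    set g : F[X] := Lagrange.interpolate Finset.univ node r with hg
    have hgeval : ∀ i, g.eval (node i) = r i := fun i =>
      Lagrange.eval_interpolate_at_node r (hnodeinj.injOn) (Finset.mem_univ i)
    have hgdeg : g.natDegree ≤ 2 * σ - 1 := by
      rcases eq_or_ne g 0 with h0 | h0
      · simp [h0]
      · have := Lagrange.degree_interpolate_lt (s := Finset.univ) r hnodeinj.injOn
        rw [← hg] at this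
        simp only [Finset.card_univ, Fintype.card_sum, Fintype.card_fin] at this
        have := (Polynomial.natDegree_lt_iff_degree_lt h0).mpr
          (by exact_mod_cast this)
        omega
    set s : Fin σ → F := fun i => g.eval (b (Fin.castLE (by omega) i)) with hs
    obtain ⟨f, hfdeg, hfa, hfb, hfsss⟩ := hsss m s
    have hfg : f = g := by
      apply poly_eq_of_agree σ hσ (hinj' _ hcastinj) hfdeg hgdeg
      rintro (i | i)
      · simp only [Sum.elim_inl]
        rw [hfa i]
        have := hgeval (Sum.inl i)
        simp only [hnode, hr, Sum.elim_inl] at this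
        rw [this]
      · simp only [Sum.elim_inr]
        rw [hfb i]
    refine ⟨s, ?_⟩
    funext j
    obtain ⟨j, hj⟩ := j
    show sss m s j = t ⟨j, hj⟩
    rw [hfsss j, hfg]
    set i := (S.orderIsoOfFin hS).symm ⟨j, hj⟩ with hi
    have hei : e i = j := by
      simp only [he, hi]
      rw [OrderIso.apply_symm_apply]
    have := hgeval (Sum.inr i)
    simp only [hnode, hr, Sum.elim_inr] at this
    have hj' : (⟨e i, heS i⟩ : {x // x ∈ S}) = ⟨j, hj⟩ := Subtype.ext hei
    rw [← hj', ← hei]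
    exact this
end

section
/- For every α ∈ (0,1) and every ε > 0 there exist a constant c > 0 and m₀ ∈ ℕ such that for all m ≥ m₀ and every string e ∈ {0,1}^m the following holds. Let T be a uniformly random subset of {1,…,m} of size ⌊αm⌋ and, independently, let b ∈ {0,1}^m be uniformly random; set T' = {i ∈ T : b_i = 1}. For a subset S ⊆ {1,…,m}, write r(S) = (Σ_{i∈S} e_i)/|S| for the relative error on S (with r(∅) = 0). Then Pr[ r({1,…,m} \ T) > r(T') + ε ] ≤ 2^{−c·m}. -/
/-!
Each pattern of `b` on `T` is realized by `2 ^ (m - k)` strings `b`, so the probability is an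
average over the pairs `(T, T')` with `T' ⊆ T` and `#T = k = ⌊α m⌋`. Pairs with `#T' ≤ k / 4` are
exponentially rare among the `2 ^ k` subsets of `T`. The remaining pairs are grouped by
`U = Tᶜ ∪ T'`: for fixed `U`, the set `T'` runs over the subsets of `U` of size `s = #U - (m - k)`,
and `r(U \ T') > r(T') + ε` forces `T'` to catch at least `c · w` fewer of the `w ≥ ε (m - k)`
errors in `U` than its share `s / #U` of them. This has probability `≤ (#U + 1) e^{-c² w / 2}`,
by a Chernoff bound for sampling without replacement: weighting `S ⊆ U` by
`y ^ #S · e^{-c · #(S ∩ errors)}` with `y = s / (#U - s)` makes the total weight a product, in which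
the `s`-th term of the binomial expansion of `(1 + y) ^ #U` is the largest.
-/

/-- The relative error of a bit string `e` on a subset `S`: the fraction of positions
`i ∈ S` with `e i = 1` (equal to `0` for `S = ∅`, since `0 / 0 = 0` in `ℝ`). -/
noncomputable def relErr {m : ℕ} (e : Fin m → Bool) (S : Finset (Fin m)) : ℝ :=
  ((S.filter (fun i => e i = true)).card : ℝ) / (S.card : ℝ)

open Finset Real Filter Topology

lemma choose_mul_sub_le_choose_succ_mul {n s j : ℕ} (hj : j < s) :
    n.choose j * (n - s) ≤ n.choose (j + 1) * s := by
  refine Nat.le_of_mul_le_mul_right ?_ j.succ_pos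
  calc n.choose j * (n - s) * (j + 1) = n.choose j * ((n - s) * (j + 1)) := by ring
    _ ≤ n.choose j * ((n - j) * s) := by gcongr; omega
    _ = n.choose (j + 1) * s * (j + 1) := by rw [← mul_assoc, ← Nat.choose_succ_right_eq]; ring

lemma choose_succ_mul_le_choose_mul_sub {n s j : ℕ} (hj : s ≤ j) :
    n.choose (j + 1) * s ≤ n.choose j * (n - s) := by
  refine Nat.le_of_mul_le_mul_right ?_ j.succ_pos
  calc n.choose (j + 1) * s * (j + 1) = n.choose j * ((n - j) * s) := by
        rw [← mul_assoc, ← Nat.choose_succ_right_eq]; ring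
    _ ≤ n.choose j * ((n - s) * (j + 1)) := by gcongr; omega
    _ = n.choose j * (n - s) * (j + 1) := by ring

lemma choose_mul_pow_le_choose_mul_pow {n s : ℕ} (hs : s < n) (i : ℕ) :
    n.choose i * ((s : ℝ) / (n - s)) ^ i ≤ n.choose s * ((s : ℝ) / (n - s)) ^ s := by
  set y : ℝ := s / (n - s)
  have hns : (0 : ℝ) < n - s := by rw [sub_pos]; exact_mod_cast hs
  have hy : (s : ℝ) = y * (n - s) := (div_mul_cancel₀ _ hns.ne').symm
  have hy0 : 0 ≤ y := by positivity
  have hcast : ((n - s : ℕ) : ℝ) = n - s := Nat.cast_sub hs.le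
  set f : ℕ → ℝ := fun i => n.choose i * y ^ i
  have up (j : ℕ) (hj : j < s) : f j ≤ f (j + 1) := by
    have h : (n.choose j : ℝ) * (n - s) ≤ n.choose (j + 1) * y * (n - s) := by
      rw [mul_assoc, ← hy, ← hcast]; exact_mod_cast choose_mul_sub_le_choose_succ_mul hj
    calc f j = n.choose j * y ^ j := rfl
      _ ≤ n.choose (j + 1) * y * y ^ j := by gcongr; exact le_of_mul_le_mul_right h hns
      _ = f (j + 1) := by simp only [f]; ring
  have down (j : ℕ) (hj : s ≤ j) : f (j + 1) ≤ f j := by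
    have h : (n.choose (j + 1) : ℝ) * y * (n - s) ≤ n.choose j * (n - s) := by
      rw [mul_assoc, ← hy, ← hcast]; exact_mod_cast choose_succ_mul_le_choose_mul_sub hj
    calc f (j + 1) = n.choose (j + 1) * y * y ^ j := by simp only [f]; ring
      _ ≤ n.choose j * y ^ j := by gcongr; exact le_of_mul_le_mul_right h hns
  show f i ≤ f s
  rcases le_total i s with his | hsi
  · exact Nat.decreasingInduction (motive := fun j _ => f j ≤ f s)
      (fun j hj ih => (up j hj).trans ih) le_rfl his
  · induction i, hsi using Nat.le_induction with
    | base => exact le_rfl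
    | succ j hj ih => exact (down j hj).trans ih

lemma one_add_pow_le_succ_mul_choose_mul_pow {n s : ℕ} (hs : s < n) :
    (1 + (s : ℝ) / (n - s)) ^ n ≤ (n + 1) * n.choose s * ((s : ℝ) / (n - s)) ^ s := by
  rw [add_comm, add_pow]
  calc ∑ i ∈ range (n + 1), ((s : ℝ) / (n - s)) ^ i * 1 ^ (n - i) * n.choose i
      ≤ ∑ _i ∈ range (n + 1), n.choose s * ((s : ℝ) / (n - s)) ^ s := by
        refine sum_le_sum fun i _ => ?_
        rw [one_pow, mul_one, mul_comm]
        exact choose_mul_pow_le_choose_mul_pow hs i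
    _ = (n + 1) * n.choose s * ((s : ℝ) / (n - s)) ^ s := by simp [mul_assoc]

lemma exp_neg_le_one_sub_add_sq_div_two {c : ℝ} (hc : 0 ≤ c) : exp (-c) ≤ 1 - c + c ^ 2 / 2 := by
  have h := mul_le_mul_of_nonneg_left (quadratic_le_exp_of_nonneg hc) (exp_pos (-c)).le
  rw [← exp_add, neg_add_cancel, exp_zero] at h
  nlinarith [exp_pos (-c), sq_nonneg (c ^ 2)]

lemma exp_mul_one_sub_mul_one_sub_exp_neg_le {q c : ℝ} (hq0 : 0 ≤ q) (hq1 : q ≤ 1)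
    (hc : 0 ≤ c) : exp (c * (q - c)) * (1 - q * (1 - exp (-c))) ≤ exp (-(c ^ 2 / 2)) := by
  have hlin : c - c ^ 2 / 2 ≤ 1 - exp (-c) := by
    linarith [exp_neg_le_one_sub_add_sq_div_two hc]
  calc exp (c * (q - c)) * (1 - q * (1 - exp (-c)))
      ≤ exp (c * (q - c)) * exp (-(q * (1 - exp (-c)))) := by
        gcongr; linarith [add_one_le_exp (-(q * (1 - exp (-c))))]
    _ ≤ exp (c * (q - c)) * exp (-(q * (c - c ^ 2 / 2))) := by gcongr
    _ ≤ exp (-(c ^ 2 / 2)) := by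
        rw [← exp_add, exp_le_exp]
        nlinarith [sq_nonneg c]

lemma sum_powerset_pow_mul_pow_card_filter {ι R : Type*} [CommSemiring R] (p : ι → Prop)
    [DecidablePred p] (U : Finset ι) (x y : R) :
    ∑ S ∈ U.powerset, y ^ #S * x ^ #{i ∈ S | p i}
      = (1 + y * x) ^ #{i ∈ U | p i} * (1 + y) ^ #{i ∈ U | ¬p i} := by
  have hS (S : Finset ι) :
      y ^ #S * x ^ #{i ∈ S | p i} = ∏ i ∈ S, if p i then y * x else y := by
    rw [prod_ite, prod_const, prod_const, mul_pow, ← card_filter_add_card_filter_not p, pow_add]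
    ring
  simp only [hS, ← prod_one_add]
  rw [← prod_const, ← prod_const, ← prod_ite]
  exact prod_congr rfl fun i _ => by split_ifs <;> rfl

lemma card_powersetCard_filter_mul_pow_le {ι : Type*} (p : ι → Prop) [DecidablePred p]
    (U : Finset ι) (s : ℕ) {y c : ℝ} (hy : 0 ≤ y) (hc : 0 ≤ c) (t : ℝ) :
    #{S ∈ U.powersetCard s | (#{i ∈ S | p i} : ℝ) ≤ t} * y ^ s
      ≤ exp (c * t) * ((1 + y * exp (-c)) ^ #{i ∈ U | p i} * (1 + y) ^ #{i ∈ U | ¬p i}) := by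
  rw [← sum_powerset_pow_mul_pow_card_filter, mul_sum, ← nsmul_eq_mul, ← sum_const]
  calc ∑ S ∈ U.powersetCard s with (#{i ∈ S | p i} : ℝ) ≤ t, y ^ s
      ≤ ∑ S ∈ U.powersetCard s with (#{i ∈ S | p i} : ℝ) ≤ t,
          exp (c * t) * (y ^ #S * exp (-c) ^ #{i ∈ S | p i}) := by
        refine sum_le_sum fun S hS => ?_
        obtain ⟨hS, ht⟩ := mem_filter.1 hS
        rw [(mem_powersetCard.1 hS).2, ← exp_nat_mul, mul_left_comm, ← exp_add]
        exact le_mul_of_one_le_right (by positivity) (one_le_exp (by nlinarith))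
    _ ≤ ∑ S ∈ U.powerset, exp (c * t) * (y ^ #S * exp (-c) ^ #{i ∈ S | p i}) :=
        sum_le_sum_of_subset_of_nonneg
          (fun S hS => mem_powerset.2 (mem_powersetCard.1 (mem_filter.1 hS).1).1)
          fun _ _ _ => by positivity

theorem card_powersetCard_filter_le_exp {ι : Type*} (p : ι → Prop) [DecidablePred p]
    (U : Finset ι) {s : ℕ} (hs : s < #U) {c : ℝ} (hc : 0 ≤ c) :
    (#{S ∈ U.powersetCard s | (#{i ∈ S | p i} : ℝ) ≤ (s / #U - c) * #{i ∈ U | p i}} : ℝ)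
      ≤ (#U + 1) * (#U).choose s * exp (-(c ^ 2 / 2 * #{i ∈ U | p i})) := by
  have hnot : #{i ∈ U | ¬p i} = #U - #{i ∈ U | p i} := by
    have := card_filter_add_card_filter_not (s := U) (fun i => p i); omega
  have hw := card_filter_le U p
  set n := #U
  set w := #{i ∈ U | p i}
  set q : ℝ := s / n
  set y : ℝ := s / (n - s)
  have hns : (0 : ℝ) < n - s := by rw [sub_pos]; exact_mod_cast hs
  have hn : (0 : ℝ) < n := by linarith [(Nat.cast_nonneg s : (0 : ℝ) ≤ s)]
  have hq0 : 0 ≤ q := by positivity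
  have hq1 : q ≤ 1 := div_le_one_of_le₀ (by linarith) hn.le
  have hy0 : 0 ≤ y := by positivity
  have hys : 0 < y ^ s := by
    rcases s.eq_zero_or_pos with rfl | h
    · simp
    · exact pow_pos (div_pos (by exact_mod_cast h) hns) s
  have hfactor : 1 + y * exp (-c) = (1 + y) * (1 - q * (1 - exp (-c))) := by
    simp only [q, y]; field_simp; ring
  have hbase : 0 ≤ 1 - q * (1 - exp (-c)) := by nlinarith [exp_pos (-c)]
  have hmarkov := card_powersetCard_filter_mul_pow_le p U s hy0 hc ((q - c) * w)
  rw [hfactor, hnot, mul_pow, mul_right_comm, ← pow_add, Nat.add_sub_cancel' hw] at hmarkov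
  refine le_of_mul_le_mul_right ?_ hys
  calc _ ≤ exp (c * ((q - c) * w)) * ((1 + y) ^ n * (1 - q * (1 - exp (-c))) ^ w) := hmarkov
    _ ≤ exp (c * ((q - c) * w)) * ((n + 1) * n.choose s * y ^ s * (1 - q * (1 - exp (-c))) ^ w) := by
        gcongr; exact one_add_pow_le_succ_mul_choose_mul_pow hs
    _ = (n + 1) * n.choose s * (exp (c * (q - c)) * (1 - q * (1 - exp (-c)))) ^ w * y ^ s := by
        rw [mul_pow, ← exp_nat_mul]; ring_nf
    _ ≤ (n + 1) * n.choose s * exp (-(c ^ 2 / 2)) ^ w * y ^ s := by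
        gcongr
        exact exp_mul_one_sub_mul_one_sub_exp_neg_le hq0 hq1 hc
    _ = (n + 1) * n.choose s * exp (-(c ^ 2 / 2 * w)) * y ^ s := by
        rw [← exp_nat_mul]; ring_nf

lemma card_filter_powerset_mul_pow_le {ι : Type*} (T : Finset ι) (r : ℕ) {x : ℝ}
    (hx0 : 0 ≤ x) (hx1 : x ≤ 1) :
    #{S ∈ T.powerset | r * #S ≤ #T} * x ^ #T ≤ (1 + x ^ r) ^ #T := by
  calc #{S ∈ T.powerset | r * #S ≤ #T} * x ^ #T
      = ∑ S ∈ T.powerset with r * #S ≤ #T, x ^ #T := by rw [sum_const, nsmul_eq_mul]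
    _ ≤ ∑ S ∈ T.powerset with r * #S ≤ #T, (x ^ r) ^ #S := by
        refine sum_le_sum fun S hS => ?_
        rw [← pow_mul]
        exact pow_le_pow_of_le_one hx0 hx1 (mem_filter.1 hS).2
    _ ≤ ∑ S ∈ T.powerset, (x ^ r) ^ #S :=
        sum_le_sum_of_subset_of_nonneg (filter_subset _ _) fun _ _ _ => by positivity
    _ = (1 + x ^ r) ^ #T := by
        simpa [add_comm] using sum_pow_mul_eq_add_pow (x ^ r) (1 : ℝ) T

lemma card_filter_powerset_four_mul_card_le {ι : Type*} (T : Finset ι) :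
    (#{S ∈ T.powerset | 4 * #S ≤ #T} : ℝ) ≤ (337 / 192) ^ #T := by
  have h := card_filter_powerset_mul_pow_le T 4 (x := 3 / 4) (by norm_num) (by norm_num)
  calc (#{S ∈ T.powerset | 4 * #S ≤ #T} : ℝ)
      = #{S ∈ T.powerset | 4 * #S ≤ #T} * (3 / 4) ^ #T * (4 / 3) ^ #T := by
        rw [mul_assoc, ← mul_pow]; norm_num
    _ ≤ (1 + (3 / 4) ^ 4) ^ #T * (4 / 3) ^ #T := by gcongr
    _ = (337 / 192) ^ #T := by rw [← mul_pow]; norm_num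

lemma card_filter_filter_true_eq_le {ι : Type*} [Fintype ι] [DecidableEq ι] (T S : Finset ι) :
    #{b : ι → Bool | {i ∈ T | b i = true} = S} ≤ 2 ^ (Fintype.card ι - #T) := by
  calc #{b : ι → Bool | {i ∈ T | b i = true} = S}
      ≤ #(univ : Finset (↥Tᶜ → Bool)) := by
        refine card_le_card_of_injOn (fun b i => b i) (fun _ _ => mem_univ _) ?_
        intro b hb b' hb' hbb'
        funext i
        by_cases hi : i ∈ T
        · have h := (mem_filter.1 hb).2.trans (mem_filter.1 hb').2.symm
          simpa [hi] using congrArg (i ∈ ·) h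
        · exact congrFun hbb' ⟨i, mem_compl.2 hi⟩
    _ = 2 ^ (Fintype.card ι - #T) := by simp

lemma card_filter_filter_true_le {ι : Type*} [Fintype ι] [DecidableEq ι] (T : Finset ι)
    (P : Finset ι → Prop) [DecidablePred P] :
    #{b : ι → Bool | P {i ∈ T | b i = true}}
      ≤ 2 ^ (Fintype.card ι - #T) * #{S ∈ T.powerset | P S} := by
  refine card_le_mul_card_image_of_maps_to (f := fun b : ι → Bool => {i ∈ T | b i = true})
    (fun b hb => mem_filter.2 ⟨mem_powerset.2 (filter_subset _ _), (mem_filter.1 hb).2⟩) _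
    fun S _ => ?_
  exact (card_le_card fun b hb => mem_filter.2 ⟨mem_univ _, (mem_filter.1 hb).2⟩).trans
    (card_filter_filter_true_eq_le T S)

lemma card_filter_powersetCard_product_le {ι : Type*} [Fintype ι] [DecidableEq ι] (k : ℕ)
    (Q : Finset ι → Finset ι → Prop) [∀ T S, Decidable (Q T S)] :
    #{Tb ∈ powersetCard k univ ×ˢ (univ : Finset (ι → Bool)) | Q Tb.1 {i ∈ Tb.1 | Tb.2 i = true}}
      ≤ 2 ^ (Fintype.card ι - k) * ∑ T ∈ powersetCard k univ, #{S ∈ T.powerset | Q T S} := by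
  rw [card_filter, sum_product, mul_sum]
  refine sum_le_sum fun T hT => ?_
  rw [← card_filter, ← (mem_powersetCard.1 hT).2]
  exact card_filter_filter_true_le T (Q T)

lemma sum_card_filter_powerset_compl_eq {ι : Type*} [Fintype ι] [DecidableEq ι] {k : ℕ}
    (hk : k ≤ Fintype.card ι) (P : Finset ι → Finset ι → Prop) [∀ C S, Decidable (P C S)] :
    ∑ T ∈ powersetCard k univ, #{S ∈ T.powerset | P Tᶜ S}
      = ∑ U, #{S ∈ U.powerset | #(U \ S) = Fintype.card ι - k ∧ P (U \ S) S} := by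
  have compl_union_sdiff {T S : Finset ι} (h : S ⊆ T) : (Tᶜ ∪ S) \ S = Tᶜ :=
    union_sdiff_cancel_right (disjoint_compl_left.mono_right h)
  simp only [← card_sigma]
  refine card_nbij' (fun x => ⟨x.1ᶜ ∪ x.2, x.2⟩) (fun x => ⟨(x.1 \ x.2)ᶜ, x.2⟩)
    ?_ ?_ ?_ ?_
  · rintro ⟨T, S⟩ h
    simp only [coe_sigma, Set.mem_sigma_iff, mem_coe, mem_powersetCard, mem_filter,
      mem_powerset] at h ⊢
    obtain ⟨⟨-, hT⟩, hST, hP⟩ := h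
    rw [compl_union_sdiff hST, card_compl, hT]
    exact ⟨mem_univ _, subset_union_right, rfl, hP⟩
  · rintro ⟨U, S⟩ h
    simp only [coe_sigma, Set.mem_sigma_iff, mem_coe, mem_powersetCard, mem_filter,
      mem_powerset] at h ⊢
    obtain ⟨-, hSU, hUS, hP⟩ := h
    refine ⟨⟨subset_univ _, ?_⟩, ?_, by rwa [compl_compl]⟩
    · rw [card_compl, hUS]; omega
    · exact subset_compl_comm.1 fun i hi => by simp_all
  · rintro ⟨T, S⟩ h
    simp only [coe_sigma, Set.mem_sigma_iff, mem_coe, mem_filter, mem_powerset] at h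
    simp [compl_union_sdiff h.2.1]
  · rintro ⟨U, S⟩ h
    simp only [coe_sigma, Set.mem_sigma_iff, mem_coe, mem_filter, mem_powerset] at h
    simp [sdiff_union_of_subset h.2.1]

lemma filter_powerset_card_sdiff_eq {ι : Type*} [DecidableEq ι] {U : Finset ι} {l : ℕ}
    (hl : l ≤ #U) : {S ∈ U.powerset | #(U \ S) = l} = U.powersetCard (#U - l) := by
  ext S
  simp only [mem_filter, mem_powerset, mem_powersetCard]
  refine and_congr_right fun hSU => ?_
  rw [card_sdiff_of_subset hSU]
  have := card_le_card hSU
  omega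

section RelErr

variable {m : ℕ} (e : Fin m → Bool) {ε c : ℝ}

lemma card_filter_mul_add_le_of_relErr_lt {U S : Finset (Fin m)} (hSU : S ⊆ U)
    (hl : 0 < #(U \ S)) (hS : 0 < #S) (h : relErr e S + ε < relErr e (U \ S)) :
    (#{i ∈ S | e i = true} : ℝ) * #U + ε * #S * #(U \ S) ≤ #S * #{i ∈ U | e i = true} := by
  have hU : (#U : ℝ) = #(U \ S) + #S := by
    rw [card_sdiff_of_subset hSU, Nat.cast_sub (card_le_card hSU)]; ring
  have hw : (#{i ∈ U | e i = true} : ℝ) = #{i ∈ U \ S | e i = true} + #{i ∈ S | e i = true} := by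
    rw [← Nat.cast_add, ← card_union_of_disjoint (disjoint_filter_filter sdiff_disjoint),
      ← filter_union, sdiff_union_of_subset hSU]
  have hS' : (0 : ℝ) < #S := by exact_mod_cast hS
  have hl' : (0 : ℝ) < #(U \ S) := by exact_mod_cast hl
  unfold relErr at h
  rw [div_add' _ _ _ hS'.ne', div_lt_div_iff₀ hS' hl'] at h
  rw [hU, hw]
  nlinarith

lemma card_filter_le_of_relErr_lt (hε : 0 ≤ ε) (hc : 0 ≤ c) {k l : ℕ}
    (hcm : 4 * c * m ^ 2 ≤ ε * k * l) {U S : Finset (Fin m)}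
    (hSU : S ⊆ U) (hUS : #(U \ S) = l) (hl : 0 < l) (hkS : k < 4 * #S)
    (h : relErr e S + ε < relErr e (U \ S)) :
    ε * l ≤ #{i ∈ U | e i = true} ∧
      (#{i ∈ S | e i = true} : ℝ) ≤ (#S / #U - c) * #{i ∈ U | e i = true} := by
  have hS : 0 < #S := by omega
  have key := card_filter_mul_add_le_of_relErr_lt e hSU (hUS ▸ hl) hS h
  rw [hUS] at key
  have hS' : (0 : ℝ) < #S := by exact_mod_cast hS
  have hU : (0 : ℝ) < #U := by exact_mod_cast hS.trans_le (card_le_card hSU)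
  have hUm : (#U : ℝ) ≤ m := by exact_mod_cast card_le_univ U |>.trans_eq (Fintype.card_fin m)
  have hwU : (#{i ∈ U | e i = true} : ℝ) ≤ #U := by exact_mod_cast card_filter_le U _
  have hks : (k : ℝ) ≤ 4 * #S := by exact_mod_cast hkS.le
  have hv := Nat.cast_nonneg (α := ℝ) #{i ∈ S | e i = true}
  have hw := Nat.cast_nonneg (α := ℝ) #{i ∈ U | e i = true}
  refine ⟨by nlinarith, ?_⟩
  have hcnw : c * #U * #{i ∈ U | e i = true} ≤ ε * #S * l := by
    have : c * (#U * #{i ∈ U | e i = true}) ≤ c * m ^ 2 := by gcongr; nlinarith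
    nlinarith [mul_le_mul_of_nonneg_left hks (by positivity : 0 ≤ ε * l)]
  rw [sub_mul, div_mul_eq_mul_div, le_sub_iff_add_le, le_div_iff₀ hU]
  nlinarith

lemma card_filter_relErr_lt_le (hε : 0 ≤ ε) (hc : 0 ≤ c)
    {k l : ℕ} (hl : 0 < l) (hcm : 4 * c * m ^ 2 ≤ ε * k * l) (U : Finset (Fin m)) :
    (#{S ∈ U.powerset | #(U \ S) = l ∧ k < 4 * #S ∧ relErr e S + ε < relErr e (U \ S)} : ℝ)
      ≤ (m + 1) * exp (-(c ^ 2 / 2 * ε * l)) * #{S ∈ U.powerset | #(U \ S) = l} := by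
  set B := {S ∈ U.powerset | #(U \ S) = l ∧ k < 4 * #S ∧ relErr e S + ε < relErr e (U \ S)}
  rcases B.eq_empty_or_nonempty with hB | ⟨S₀, hS₀⟩
  · rw [hB, card_empty, Nat.cast_zero]; positivity
  obtain ⟨hS₀U, hUS₀, hkS₀, h₀⟩ := mem_filter.1 hS₀
  have hlU : l ≤ #U := hUS₀ ▸ card_le_card sdiff_subset
  have hw := (card_filter_le_of_relErr_lt e hε hc hcm (mem_powerset.1 hS₀U) hUS₀ hl hkS₀ h₀).1
  have hsub : B ⊆ {S ∈ U.powersetCard (#U - l) |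
      (#{i ∈ S | e i = true} : ℝ) ≤ ((#U - l : ℕ) / #U - c) * #{i ∈ U | e i = true}} := by
    intro S hS
    obtain ⟨hSU, hUS, hkS, h⟩ := mem_filter.1 hS
    have hS : S ∈ U.powersetCard (#U - l) := filter_powerset_card_sdiff_eq hlU ▸
      mem_filter.2 ⟨hSU, hUS⟩
    refine mem_filter.2 ⟨hS, ?_⟩
    rw [← (mem_powersetCard.1 hS).2]
    exact (card_filter_le_of_relErr_lt e hε hc hcm (mem_powerset.1 hSU) hUS hl hkS h).2
  have hUm : (#U : ℝ) ≤ m := by exact_mod_cast card_le_univ U |>.trans_eq (Fintype.card_fin m)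
  calc (#B : ℝ) ≤ #{S ∈ U.powersetCard (#U - l) |
        (#{i ∈ S | e i = true} : ℝ) ≤ ((#U - l : ℕ) / #U - c) * #{i ∈ U | e i = true}} := by
        exact_mod_cast card_le_card hsub
    _ ≤ (#U + 1) * (#U).choose (#U - l) * exp (-(c ^ 2 / 2 * #{i ∈ U | e i = true})) :=
        card_powersetCard_filter_le_exp _ U (by omega) hc
    _ ≤ (m + 1) * exp (-(c ^ 2 / 2 * ε * l)) * #{S ∈ U.powerset | #(U \ S) = l} := by
        rw [filter_powerset_card_sdiff_eq hlU, card_powersetCard, mul_right_comm,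
          mul_assoc (c ^ 2 / 2)]
        gcongr

lemma sum_card_filter_relErr_lt_le {k : ℕ} (hε : 0 ≤ ε) (hc : 0 ≤ c) (hkm : k < m) (hcm : 4 * c * m ^ 2 ≤ ε * k * (m - k : ℕ)) :
    ∑ T ∈ powersetCard k univ,
        (#{S ∈ T.powerset | k < 4 * #S ∧ relErr e S + ε < relErr e Tᶜ} : ℝ)
      ≤ (m + 1) * exp (-(c ^ 2 / 2 * ε * (m - k : ℕ))) * (m.choose k * 2 ^ k) := by
  have hk : k ≤ Fintype.card (Fin m) := hkm.le.trans_eq (Fintype.card_fin m).symm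
  have hbad := sum_card_filter_powerset_compl_eq hk
    (fun C S => k < 4 * #S ∧ relErr e S + ε < relErr e C)
  have hall := sum_card_filter_powerset_compl_eq hk (fun _ _ => True)
  simp only [Fintype.card_fin, filter_true, and_true, card_powerset] at hbad hall
  rw [← Nat.cast_sum, hbad, Nat.cast_sum]
  calc ∑ U, (#{S ∈ U.powerset | #(U \ S) = m - k ∧ k < 4 * #S ∧
        relErr e S + ε < relErr e (U \ S)} : ℝ)
      ≤ ∑ U, (m + 1) * exp (-(c ^ 2 / 2 * ε * (m - k : ℕ))) *
          #{S ∈ U.powerset | #(U \ S) = m - k} :=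
        sum_le_sum fun U _ => card_filter_relErr_lt_le e hε hc (by omega) hcm U
    _ = (m + 1) * exp (-(c ^ 2 / 2 * ε * (m - k : ℕ))) * (m.choose k * 2 ^ k) := by
        rw [← mul_sum, ← Nat.cast_sum, ← hall,
          sum_congr rfl fun T hT => by rw [(mem_powersetCard.1 hT).2], sum_const,
          card_powersetCard, card_univ, Fintype.card_fin, smul_eq_mul]
        push_cast; ring

lemma card_filter_relErr_compl_gt_le {k : ℕ} (hε : 0 ≤ ε) (hc : 0 ≤ c) (hkm : k < m) (hcm : 4 * c * m ^ 2 ≤ ε * k * (m - k : ℕ)) :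
    (#{Tb ∈ powersetCard k univ ×ˢ (univ : Finset (Fin m → Bool)) |
        relErr e Tb.1ᶜ > relErr e {i ∈ Tb.1 | Tb.2 i = true} + ε} : ℝ)
      ≤ m.choose k * 2 ^ m *
          ((337 / 384) ^ k + (m + 1) * exp (-(c ^ 2 / 2 * ε * (m - k : ℕ)))) := by
  set δ := (m + 1) * exp (-(c ^ 2 / 2 * ε * (m - k : ℕ)))
  have hsplit (T : Finset (Fin m)) : #{S ∈ T.powerset | relErr e Tᶜ > relErr e S + ε}
      ≤ #{S ∈ T.powerset | 4 * #S ≤ k}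
        + #{S ∈ T.powerset | k < 4 * #S ∧ relErr e S + ε < relErr e Tᶜ} := by
    refine (card_le_card fun S hS => ?_).trans (card_union_le _ _)
    rw [mem_union, mem_filter, mem_filter]
    obtain ⟨hST, h⟩ := mem_filter.1 hS
    by_cases hk : 4 * #S ≤ k
    · exact .inl ⟨hST, hk⟩
    · exact .inr ⟨hST, by omega, h⟩
  have hsmall : ∑ T ∈ powersetCard k (univ : Finset (Fin m)), (#{S ∈ T.powerset | 4 * #S ≤ k} : ℝ)
      ≤ m.choose k * (337 / 192) ^ k := by
    have hcard : #(powersetCard k (univ : Finset (Fin m))) = m.choose k := by simp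
    rw [← hcard, ← nsmul_eq_mul]
    refine sum_le_card_nsmul _ _ _ fun T hT => ?_
    simpa only [(mem_powersetCard.1 hT).2] using card_filter_powerset_four_mul_card_le T
  have hpow : (2 : ℝ) ^ (m - k) * 2 ^ k = 2 ^ m := by rw [← pow_add, Nat.sub_add_cancel hkm.le]
  calc _ ≤ (2 : ℝ) ^ (m - k) *
        ∑ T ∈ powersetCard k univ, (#{S ∈ T.powerset | relErr e Tᶜ > relErr e S + ε} : ℝ) := by
        have := card_filter_powersetCard_product_le k (fun T S => relErr e Tᶜ > relErr e S + ε)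
        rw [Fintype.card_fin] at this
        exact_mod_cast this
    _ ≤ 2 ^ (m - k) * ∑ T ∈ powersetCard k univ, ((#{S ∈ T.powerset | 4 * #S ≤ k} : ℝ)
          + #{S ∈ T.powerset | k < 4 * #S ∧ relErr e S + ε < relErr e Tᶜ}) := by
        gcongr with T; exact_mod_cast hsplit T
    _ ≤ 2 ^ (m - k) * (m.choose k * (337 / 192) ^ k + δ * (m.choose k * 2 ^ k)) := by
        rw [sum_add_distrib]
        gcongr
        exact sum_card_filter_relErr_lt_le e hε hc hkm hcm
    _ = m.choose k * 2 ^ m * ((337 / 384) ^ k + δ) := by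
        rw [← hpow, show (337 / 384 : ℝ) = 337 / 192 * 2⁻¹ by norm_num, mul_pow, inv_pow]
        field_simp

end RelErr

lemma pow_add_mul_exp_le {α a b : ℝ} (ha0 : 0 < a) (ha1 : a < 1) (hb : 0 ≤ b) {m k : ℕ}
    (hkm : k ≤ m) (hk : α * m / 2 ≤ k) (hkα : k ≤ α * m) :
    a ^ k + (m + 1) * exp (-(b * (m - k : ℕ)))
      ≤ (m + 2) * max (a ^ (α / 2)) (exp (-(b * (1 - α)))) ^ m := by
  have h₁ : a ^ k ≤ (a ^ (α / 2)) ^ m := by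
    rw [← rpow_natCast, ← rpow_natCast, ← rpow_mul ha0.le]
    exact rpow_le_rpow_of_exponent_ge ha0 ha1.le (by linarith)
  have h₂ : exp (-(b * (m - k : ℕ))) ≤ exp (-(b * (1 - α))) ^ m := by
    rw [← exp_nat_mul, exp_le_exp, Nat.cast_sub hkm]
    nlinarith
  calc a ^ k + (m + 1) * exp (-(b * (m - k : ℕ)))
      ≤ max (a ^ (α / 2)) (exp (-(b * (1 - α)))) ^ m
        + (m + 1) * max (a ^ (α / 2)) (exp (-(b * (1 - α)))) ^ m := by
        gcongr
        · exact h₁.trans (pow_le_pow_left₀ (by positivity) (le_max_left _ _) m)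
        · exact h₂.trans (pow_le_pow_left₀ (by positivity) (le_max_right _ _) m)
    _ = (m + 2) * max (a ^ (α / 2)) (exp (-(b * (1 - α)))) ^ m := by ring

lemma exists_add_two_mul_pow_le_two_rpow {ρ : ℝ} (hρ0 : 0 ≤ ρ) (hρ1 : ρ < 1) :
    ∃ c : ℝ, 0 < c ∧ ∃ m₀ : ℕ, ∀ m ≥ m₀, (m + 2) * ρ ^ m ≤ (2 : ℝ) ^ (-(c * m)) := by
  set σ := (1 + ρ) / 2
  have hσ0 : 0 < σ := by positivity
  have hσ1 : σ < 1 := by simp only [σ]; linarith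
  have hr0 : 0 ≤ ρ / σ := by positivity
  have hr1 : ρ / σ < 1 := (div_lt_one hσ0).2 (by simp only [σ]; linarith)
  have hlim : Tendsto (fun m : ℕ => (m + 2) * (ρ / σ) ^ m) atTop (𝓝 0) := by
    simpa [add_mul] using (tendsto_self_mul_const_pow_of_lt_one hr0 hr1).add
      ((tendsto_pow_atTop_nhds_zero_of_lt_one hr0 hr1).const_mul 2)
  obtain ⟨m₀, hm₀⟩ := eventually_atTop.1 (hlim.eventually (ge_mem_nhds zero_lt_one))
  refine ⟨-logb 2 σ, neg_pos.2 (logb_neg one_lt_two hσ0 hσ1), m₀, fun m hm => ?_⟩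
  rw [neg_mul, neg_neg, rpow_mul zero_le_two, rpow_logb two_pos (by norm_num) hσ0,
    rpow_natCast]
  calc (m + 2) * ρ ^ m = (m + 2) * (ρ / σ) ^ m * σ ^ m := by
        rw [div_pow, mul_assoc, div_mul_cancel₀ _ (pow_pos hσ0 m).ne']
    _ ≤ 1 * σ ^ m := by gcongr; exact hm₀ m hm
    _ = σ ^ m := one_mul _

open Classical in
/-- **Classical sampling bound.** For every `α ∈ (0,1)` and `ε > 0` there are `c > 0`
and `m₀` such that for all `m ≥ m₀` and every string `e ∈ {0,1}^m` the following holds: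
if `T` is a uniformly random subset of `{1,…,m}` of size `⌊αm⌋` and, independently,
`b ∈ {0,1}^m` is uniformly random, and `T' = {i ∈ T : b i = 1}`, then the probability
that the relative error on the complement of `T` exceeds the relative error on `T'`
by more than `ε` is at most `2^{−c·m}`. -/
theorem sampling_bound (α ε : ℝ) (hα0 : 0 < α) (hα1 : α < 1) (hε : 0 < ε) :
    ∃ c : ℝ, 0 < c ∧ ∃ m₀ : ℕ, ∀ m : ℕ, m₀ ≤ m → ∀ e : Fin m → Bool,
      (((((Finset.univ : Finset (Fin m)).powersetCard ⌊α * m⌋₊ ×ˢ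
            (Finset.univ : Finset (Fin m → Bool))).filter
          (fun Tb : Finset (Fin m) × (Fin m → Bool) =>
            relErr e Tb.1ᶜ >
              relErr e (Tb.1.filter (fun i => Tb.2 i = true)) + ε)).card : ℝ) /
        ((((Finset.univ : Finset (Fin m)).powersetCard ⌊α * m⌋₊).card : ℝ) * 2 ^ m))
      ≤ (2 : ℝ) ^ (-(c * (m : ℝ))) := by
  set c₀ := ε * α * (1 - α) / 8
  set ρ := max ((337 / 384 : ℝ) ^ (α / 2)) (exp (-(c₀ ^ 2 / 2 * ε * (1 - α))))
  have hα1' : 0 < 1 - α := sub_pos.2 hα1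
  have hρ : ρ < 1 := max_lt (rpow_lt_one (by norm_num) (by norm_num) (by positivity))
    (exp_lt_one_iff.2 (neg_lt_zero.2 (by positivity)))
  obtain ⟨c, hc, m₀, hm₀⟩ := exists_add_two_mul_pow_le_two_rpow
    ((exp_pos _).le.trans (le_max_right _ _)) hρ
  refine ⟨c, hc, max m₀ ⌈2 / α⌉₊, fun m hm e => ?_⟩
  set k := ⌊α * m⌋₊
  have hαm : 2 ≤ α * m := (div_le_iff₀' hα0).1
    ((Nat.le_ceil _).trans (by exact_mod_cast le_of_max_le_right hm))
  have hkα : (k : ℝ) ≤ α * m := Nat.floor_le (by positivity)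
  have hk : α * m / 2 ≤ k := by linarith [Nat.lt_floor_add_one (α * m)]
  have hkm : k < m := by exact_mod_cast hkα.trans_lt (by nlinarith : α * m < m)
  have hcm : 4 * c₀ * m ^ 2 ≤ ε * k * (m - k : ℕ) := by
    have : (1 - α) * m ≤ ((m - k : ℕ) : ℝ) := by rw [Nat.cast_sub hkm.le]; linarith
    calc 4 * c₀ * m ^ 2 = ε * (α * m / 2) * ((1 - α) * m) := by ring
      _ ≤ ε * k * (m - k : ℕ) := by gcongr
  rw [card_powersetCard, card_univ, Fintype.card_fin, div_le_iff₀
    (mul_pos (by exact_mod_cast Nat.choose_pos hkm.le) (by positivity))]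
  calc _ ≤ m.choose k * 2 ^ m *
        ((337 / 384) ^ k + (m + 1) * exp (-(c₀ ^ 2 / 2 * ε * (m - k : ℕ)))) :=
        card_filter_relErr_compl_gt_le e hε.le (by positivity) hkm hcm
    _ ≤ m.choose k * 2 ^ m * ((m + 2) * ρ ^ m) := by
        gcongr
        exact pow_add_mul_exp_le (a := 337 / 384) (b := c₀ ^ 2 / 2 * ε) (by norm_num)
          (by norm_num) (by positivity) hkm.le hk hkα
    _ ≤ 2 ^ (-(c * m)) * (m.choose k * 2 ^ m) := by
        rw [mul_comm]; gcongr; exact hm₀ m (le_of_max_le_left hm)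
end
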